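/- Let f : ℝⁿ → ℝ and G : ℝⁿ → S^m be twice continuously differentiable. Suppose (x,Λ) ∈ ℝⁿ × S^m is a KKT pair of (P1) satisfying strict complementarity (rank G(x) + rank Λ = m) and the SOSC-SDP inequality: ⟨(∇²ₓL(x,Λ) + H(x,Λ))d, d⟩ > 0 for all nonzero d in the critical cone C(x). Then there exists Y ∈ S^m (one may take Y = √G(x)) such that (x,Y,Λ) is a KKT triple of (P2) satisfying SOSC-NLP. -/

import Mathlib

open Matrix

noncomputable section

def jmul {m : ℕ} (A B : Matrix (Fin m) (Fin m) ℝ) : Matrix (Fin m) (Fin m) ℝ :=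
  (1 / 2 : ℝ) • (A * B + B * A)

def minner {m : ℕ} (A B : Matrix (Fin m) (Fin m) ℝ) : ℝ :=
  (A * B).trace

def memPhi {m : ℕ} (Λ Y : Matrix (Fin m) (Fin m) ℝ) : Prop :=
  ∀ W : Matrix (Fin m) (Fin m) ℝ, W.IsSymm → W ≠ 0 → jmul Y W = 0 →
    0 < minner (jmul W W) Λ

def pderivG {n m : ℕ} (G : (Fin n → ℝ) → Matrix (Fin m) (Fin m) ℝ)
    (x : Fin n → ℝ) (k : Fin n) : Matrix (Fin m) (Fin m) ℝ :=
  Matrix.of fun i j => fderiv ℝ (fun y => G y i j) x (Pi.single k 1)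

def dirDerivG {n m : ℕ} (G : (Fin n → ℝ) → Matrix (Fin m) (Fin m) ℝ)
    (x v : Fin n → ℝ) : Matrix (Fin m) (Fin m) ℝ :=
  ∑ k, v k • pderivG G x k

def adjDG {n m : ℕ} (G : (Fin n → ℝ) → Matrix (Fin m) (Fin m) ℝ)
    (x : Fin n → ℝ) (W : Matrix (Fin m) (Fin m) ℝ) : Fin n → ℝ :=
  fun k => minner (pderivG G x k) W

def gradf {n : ℕ} (f : (Fin n → ℝ) → ℝ) (x : Fin n → ℝ) : Fin n → ℝ :=
  fun k => fderiv ℝ f x (Pi.single k 1)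

def KKT1 {n m : ℕ} (f : (Fin n → ℝ) → ℝ) (G : (Fin n → ℝ) → Matrix (Fin m) (Fin m) ℝ)
    (x : Fin n → ℝ) (Λ : Matrix (Fin m) (Fin m) ℝ) : Prop :=
  gradf f x = adjDG G x Λ ∧ Λ.PosSemidef ∧ (G x).PosSemidef ∧ jmul Λ (G x) = 0

def KKT2 {n m : ℕ} (f : (Fin n → ℝ) → ℝ) (G : (Fin n → ℝ) → Matrix (Fin m) (Fin m) ℝ)
    (x : Fin n → ℝ) (Y Λ : Matrix (Fin m) (Fin m) ℝ) : Prop :=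
  gradf f x = adjDG G x Λ ∧ jmul Λ Y = 0 ∧ G x = jmul Y Y

def hessQ {n m : ℕ} (f : (Fin n → ℝ) → ℝ) (G : (Fin n → ℝ) → Matrix (Fin m) (Fin m) ℝ)
    (Λ : Matrix (Fin m) (Fin m) ℝ) (x v : Fin n → ℝ) : ℝ :=
  iteratedFDeriv ℝ 2 (fun y => f y - minner (G y) Λ) x ![v, v]

def SOSCNLP {n m : ℕ} (f : (Fin n → ℝ) → ℝ) (G : (Fin n → ℝ) → Matrix (Fin m) (Fin m) ℝ)
    (x : Fin n → ℝ) (Y Λ : Matrix (Fin m) (Fin m) ℝ) : Prop :=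
  ∀ (v : Fin n → ℝ) (W : Matrix (Fin m) (Fin m) ℝ), W.IsSymm →
    ¬(v = 0 ∧ W = 0) → dirDerivG G x v = (2 : ℝ) • jmul Y W →
    0 < hessQ f G Λ x v + 2 * minner (jmul W W) Λ

def SONCNLP {n m : ℕ} (f : (Fin n → ℝ) → ℝ) (G : (Fin n → ℝ) → Matrix (Fin m) (Fin m) ℝ)
    (x : Fin n → ℝ) (Y Λ : Matrix (Fin m) (Fin m) ℝ) : Prop :=
  ∀ (v : Fin n → ℝ) (W : Matrix (Fin m) (Fin m) ℝ), W.IsSymm →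
    dirDerivG G x v = (2 : ℝ) • jmul Y W →
    0 ≤ hessQ f G Λ x v + 2 * minner (jmul W W) Λ

def LICQ {n m : ℕ} (G : (Fin n → ℝ) → Matrix (Fin m) (Fin m) ℝ)
    (x : Fin n → ℝ) (Y : Matrix (Fin m) (Fin m) ℝ) : Prop :=
  ∀ W : Matrix (Fin m) (Fin m) ℝ, W.IsSymm → jmul Y W = 0 → adjDG G x W = 0 → W = 0

def Nondeg {n m : ℕ} (G : (Fin n → ℝ) → Matrix (Fin m) (Fin m) ℝ)
    (x : Fin n → ℝ) : Prop :=
  ∀ W : Matrix (Fin m) (Fin m) ℝ, W.IsSymm → G x * W = 0 → adjDG G x W = 0 → W = 0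

def CritCone {n m : ℕ} (f : (Fin n → ℝ) → ℝ) (G : (Fin n → ℝ) → Matrix (Fin m) (Fin m) ℝ)
    (x : Fin n → ℝ) : Set (Fin n → ℝ) :=
  {d | (∀ u : Fin m → ℝ, G x *ᵥ u = 0 → 0 ≤ u ⬝ᵥ (dirDerivG G x d *ᵥ u)) ∧
    gradf f x ⬝ᵥ d = 0}

def IsMPInv {m : ℕ} (A P : Matrix (Fin m) (Fin m) ℝ) : Prop :=
  A * P * A = A ∧ P * A * P = P ∧ (A * P)ᵀ = A * P ∧ (P * A)ᵀ = P * A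

def Hmat {n m : ℕ} (G : (Fin n → ℝ) → Matrix (Fin m) (Fin m) ℝ)
    (x : Fin n → ℝ) (Λ P : Matrix (Fin m) (Fin m) ℝ) : Matrix (Fin n) (Fin n) ℝ :=
  Matrix.of fun i j => 2 * (pderivG G x i * P * pderivG G x j * Λ).trace

/-!
Take `Y = √G(x)`. For positive semidefinite `G(x)` and `Λ`, the complementarity `Λ ∘ G(x) = 0`
forces `tr (G(x) Λ) = 0` and hence `G(x) Λ = 0`, so `Y Λ = Λ Y = 0`. Let `(v, W)` satisfy
`DG(x) v = Y W + W Y`.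

If `v ≠ 0`, then `v` lies in the critical cone. With `P = G(x)†` the curvature term is
`vᵀ H v = 2 tr (W (Y P Y) W Λ)`. Since `Y P Y` is the projection onto the range of `G(x)`, it is
`≤ 1`, so `vᵀ H v ≤ 2 tr (W² Λ)`. SOSC-SDP then gives SOSC-NLP.

If `v = 0`, then `Y W + W Y = 0` forces `Y W = 0`, so `G(x) W = 0`. Strict complementarity
makes `ker G(x) ∩ ker Λ` trivial, so `tr (W² Λ) > 0` unless `W = 0`.
-/

open scoped MatrixOrder ComplexOrder

namespace Matrix

variable {n 𝕜 : Type*} [Fintype n] [RCLike 𝕜]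

lemma IsHermitian.posSemidef_mul_self {W : Matrix n n 𝕜} (hW : W.IsHermitian) :
    (W * W).PosSemidef := by
  simpa [hW.eq] using posSemidef_conjTranspose_mul_self W

variable [DecidableEq n]

lemma posSemidef_sqrt (A : Matrix n n 𝕜) : (CFC.sqrt A).PosSemidef :=
  nonneg_iff_posSemidef.mp (CFC.sqrt_nonneg A)

lemma PosSemidef.trace_mul_eq_trace_conjTranspose_mul_self {A B : Matrix n n 𝕜}
    (hA : A.PosSemidef) (hB : B.PosSemidef) :
    (A * B).trace = ((CFC.sqrt A * CFC.sqrt B)ᴴ * (CFC.sqrt A * CFC.sqrt B)).trace := by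
  set R := CFC.sqrt A
  set S := CFC.sqrt B
  calc (A * B).trace = (R * R * (S * S)).trace := by
        rw [CFC.sqrt_mul_sqrt_self A hA.nonneg, CFC.sqrt_mul_sqrt_self B hB.nonneg]
    _ = (S * R * (R * S)).trace := by
        rw [← mul_assoc, trace_mul_comm]
        simp only [mul_assoc]
    _ = _ := by rw [conjTranspose_mul, (posSemidef_sqrt A).isHermitian.eq,
                  (posSemidef_sqrt B).isHermitian.eq]

lemma PosSemidef.trace_mul_nonneg {A B : Matrix n n 𝕜} (hA : A.PosSemidef) (hB : B.PosSemidef) :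
    0 ≤ (A * B).trace := by
  rw [hA.trace_mul_eq_trace_conjTranspose_mul_self hB]
  exact (posSemidef_conjTranspose_mul_self _).trace_nonneg

lemma PosSemidef.mul_eq_zero_of_trace_mul_eq_zero {A B : Matrix n n 𝕜} (hA : A.PosSemidef)
    (hB : B.PosSemidef) (h : (A * B).trace = 0) : A * B = 0 := by
  rw [hA.trace_mul_eq_trace_conjTranspose_mul_self hB,
    trace_conjTranspose_mul_self_eq_zero_iff] at h
  calc A * B = CFC.sqrt A * (CFC.sqrt A * CFC.sqrt B) * CFC.sqrt B := by
        rw [mul_assoc, mul_assoc, CFC.sqrt_mul_sqrt_self B hB.nonneg, ← mul_assoc,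
          CFC.sqrt_mul_sqrt_self A hA.nonneg]
    _ = 0 := by rw [h, mul_zero, zero_mul]

lemma PosSemidef.mul_eq_zero_of_add_eq_zero {A B : Matrix n n 𝕜} (hA : A.PosSemidef)
    (hB : B.PosSemidef) (h : A * B + B * A = 0) : A * B = 0 := by
  apply hA.mul_eq_zero_of_trace_mul_eq_zero hB
  have h2 : 2 * (A * B).trace = 0 := by
    rw [two_mul]
    nth_rewrite 2 [trace_mul_comm]
    rw [← trace_add, h, trace_zero]
  simpa using h2

lemma PosSemidef.mul_eq_zero_of_mul_add_mul_eq_zero {Y W : Matrix n n 𝕜} (hY : Y.PosSemidef)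
    (hW : W.IsHermitian) (h : Y * W + W * Y = 0) : Y * W = 0 := by
  have hWW := hW.posSemidef_mul_self
  have htr : (Y * (W * W)).trace = 0 := by
    have hneg : Y * (W * W) = -(W * Y * W) := by
      rw [← mul_assoc, eq_neg_of_add_eq_zero_left h, neg_mul]
    have hcyc : (W * Y * W).trace = (Y * (W * W)).trace := by
      rw [trace_mul_comm, ← mul_assoc, trace_mul_comm]
    have := congrArg trace hneg
    rw [trace_neg, hcyc] at this
    exact CharZero.eq_neg_self_iff.mp this
  have h0 := hY.mul_eq_zero_of_trace_mul_eq_zero hWW htr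
  rw [← self_mul_conjTranspose_eq_zero, conjTranspose_mul, hW.eq, hY.isHermitian.eq,
    ← mul_assoc, mul_assoc Y, h0, zero_mul]

lemma PosSemidef.trace_conjTranspose_mul_mul_le {E Λ : Matrix n n 𝕜} (hΛ : Λ.PosSemidef)
    (hE : E ≤ 1) (W : Matrix n n 𝕜) : (Wᴴ * E * W * Λ).trace ≤ (Wᴴ * W * Λ).trace := by
  have hgap : (Wᴴ * W - Wᴴ * E * W).PosSemidef := by
    have := (le_iff.mp hE).conjTranspose_mul_mul_same W
    rwa [mul_sub, sub_mul, mul_one] at this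
  have := hgap.trace_mul_nonneg hΛ
  rwa [sub_mul, trace_sub, sub_nonneg] at this

lemma eq_zero_of_mul_eq_zero_of_rank_add_rank {A Λ W : Matrix n n 𝕜} (hΛ : Λ.IsHermitian)
    (hAΛ : A * Λ = 0) (hrank : A.rank + Λ.rank = Fintype.card n) (hAW : A * W = 0)
    (hΛW : Λ * W = 0) : W = 0 := by
  have hle : LinearMap.range Λ.mulVecLin ≤ LinearMap.ker A.mulVecLin := by
    rintro _ ⟨w, rfl⟩
    simp [mulVec_mulVec, hAΛ]
  have hrn := LinearMap.finrank_range_add_finrank_ker A.mulVecLin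
  rw [Module.finrank_fintype_fun_eq_card] at hrn
  have hrange : LinearMap.range Λ.mulVecLin = LinearMap.ker A.mulVecLin :=
    Submodule.eq_of_le_of_finrank_le hle (by unfold rank at hrank; omega)
  ext i j
  obtain ⟨w, hw⟩ : W *ᵥ Pi.single j 1 ∈ LinearMap.range Λ.mulVecLin := by
    rw [hrange, LinearMap.mem_ker, mulVecLin_apply, mulVec_mulVec, hAW, zero_mulVec]
  have hcol : W *ᵥ Pi.single j 1 = 0 := by
    rw [← dotProduct_star_self_eq_zero]
    simp only [mulVecLin_apply] at hw
    rw [← hw, star_mulVec, ← dotProduct_mulVec, hΛ.eq, hw, mulVec_mulVec, hΛW, zero_mulVec,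
      dotProduct_zero]
  simpa using congrFun hcol i

lemma trace_mul_self_mul_pos_of_rank_add_rank {A Λ W : Matrix n n 𝕜} (hΛ : Λ.PosSemidef)
    (hAΛ : A * Λ = 0) (hrank : A.rank + Λ.rank = Fintype.card n) (hW : W.IsHermitian)
    (hAW : A * W = 0) (hW0 : W ≠ 0) : 0 < (W * W * Λ).trace := by
  have hWW := hW.posSemidef_mul_self
  refine lt_of_le_of_ne (hWW.trace_mul_nonneg hΛ) fun h0 => hW0 ?_
  have hWΛ : W * Λ = 0 := by
    rw [← conjTranspose_mul_self_mul_eq_zero, hW.eq]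
    exact hWW.mul_eq_zero_of_trace_mul_eq_zero hΛ h0.symm
  have hΛW : Λ * W = 0 := by
    simpa [hΛ.isHermitian.eq, hW.eq] using congrArg conjTranspose hWΛ
  exact eq_zero_of_mul_eq_zero_of_rank_add_rank hΛ.isHermitian hAΛ hrank hAW hΛW

lemma PosSemidef.sqrt_mul_cfc_inv_mul_sqrt_le_one {A : Matrix n n 𝕜} (hA : A.PosSemidef) :
    CFC.sqrt A * cfc (·⁻¹ : ℝ → ℝ) A * CFC.sqrt A ≤ 1 := by
  have hc (f : ℝ → ℝ) : ContinuousOn f (spectrum ℝ A) := A.finite_real_spectrum.continuousOn f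
  rw [CFC.sqrt_eq_real_sqrt A hA.nonneg, cfcₙ_eq_cfc, ← cfc_mul _ _ A (hc _) (hc _),
    ← cfc_mul _ _ A (hc _) (hc _)]
  refine cfc_le_one _ A fun t _ => ?_
  rcases le_or_gt 0 t with ht | ht
  · rw [mul_right_comm, Real.mul_self_sqrt ht]
    exact mul_inv_le_one
  · simp [Real.sqrt_eq_zero_of_nonpos ht.le]

end Matrix

/-- Since `0⁻¹ = 0`, `cfc (·⁻¹) A` inverts `A` on its range and vanishes on its kernel. -/
lemma isMPInv_cfc_inv {m : ℕ} {A : Matrix (Fin m) (Fin m) ℝ} (hA : A.IsHermitian) :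
    IsMPInv A (cfc (·⁻¹ : ℝ → ℝ) A) := by
  have hc (f : ℝ → ℝ) : ContinuousOn f (spectrum ℝ A) := A.finite_real_spectrum.continuousOn f
  have hid : cfc (fun t : ℝ => t) A = A := cfc_id' ℝ A hA
  have hmul (f g : ℝ → ℝ) : cfc f A * cfc g A = cfc (fun t => f t * g t) A :=
    (cfc_mul f g A (hc f) (hc g)).symm
  have hsym (f : ℝ → ℝ) : (cfc f A)ᵀ = cfc f A := by
    rw [← conjTranspose_eq_transpose_of_trivial]
    exact cfc_predicate f A
  refine ⟨?_, ?_, ?_, ?_⟩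
  · calc A * cfc (·⁻¹) A * A = cfc (fun t => t) A * cfc (·⁻¹) A * cfc (fun t => t) A := by
          rw [hid]
      _ = cfc (fun t => t) A := by
          rw [hmul, hmul]
          exact cfc_congr fun t _ => mul_inv_mul_cancel t
      _ = A := hid
  · calc cfc (·⁻¹) A * A * cfc (·⁻¹) A
        = cfc (·⁻¹) A * cfc (fun t => t) A * cfc (·⁻¹) A := by rw [hid]
      _ = cfc (·⁻¹) A := by
          rw [hmul, hmul]
          exact cfc_congr fun t _ => by simpa using mul_inv_mul_cancel t⁻¹
  · nth_rewrite 1 [← hid]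
    rw [hmul, hsym, ← hmul, hid]
  · nth_rewrite 2 [← hid]
    rw [hmul, hsym, ← hmul, hid]

lemma two_smul_jmul {m : ℕ} (A B : Matrix (Fin m) (Fin m) ℝ) :
    (2 : ℝ) • jmul A B = A * B + B * A := by
  simp [jmul, smul_smul]

lemma jmul_self {m : ℕ} (A : Matrix (Fin m) (Fin m) ℝ) : jmul A A = A * A := by
  rw [jmul, ← two_smul ℝ (A * A), smul_smul]
  norm_num

lemma dirDerivG_zero {n m : ℕ} (G : (Fin n → ℝ) → Matrix (Fin m) (Fin m) ℝ) (x : Fin n → ℝ) :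
    dirDerivG G x 0 = 0 := by
  simp [dirDerivG]

lemma hessQ_zero {n m : ℕ} (f : (Fin n → ℝ) → ℝ) (G : (Fin n → ℝ) → Matrix (Fin m) (Fin m) ℝ)
    (Λ : Matrix (Fin m) (Fin m) ℝ) (x : Fin n → ℝ) : hessQ f G Λ x 0 = 0 :=
  (iteratedFDeriv ℝ 2 (fun y => f y - minner (G y) Λ) x).map_coord_zero 0 rfl

lemma adjDG_dotProduct {n m : ℕ} (G : (Fin n → ℝ) → Matrix (Fin m) (Fin m) ℝ) (x v : Fin n → ℝ)
    (W : Matrix (Fin m) (Fin m) ℝ) : adjDG G x W ⬝ᵥ v = (dirDerivG G x v * W).trace := by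
  simp only [adjDG, minner, dirDerivG, dotProduct, Finset.sum_mul, trace_sum, smul_mul_assoc,
    trace_smul, smul_eq_mul, mul_comm]

lemma dotProduct_Hmat_mulVec {n m : ℕ} (G : (Fin n → ℝ) → Matrix (Fin m) (Fin m) ℝ)
    (x v : Fin n → ℝ) (Λ P : Matrix (Fin m) (Fin m) ℝ) :
    v ⬝ᵥ (Hmat G x Λ P *ᵥ v) = 2 * (dirDerivG G x v * P * dirDerivG G x v * Λ).trace := by
  simp only [Hmat, dirDerivG, dotProduct, mulVec, of_apply, Finset.sum_mul, Finset.mul_sum,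
    trace_sum, smul_mul_assoc, mul_smul_comm, trace_smul, smul_eq_mul]
  rw [Finset.sum_comm]
  refine Finset.sum_congr rfl fun i _ => Finset.sum_congr rfl fun j _ => ?_
  ring

lemma trace_anticomm_mul_anticomm_mul {R : Type*} [CommRing R] {ι : Type*} [Fintype ι]
    {Y Λ : Matrix ι ι R} (hYΛ : Y * Λ = 0) (hΛY : Λ * Y = 0) (W P : Matrix ι ι R) :
    ((Y * W + W * Y) * P * (Y * W + W * Y) * Λ).trace = (W * (Y * P * Y) * W * Λ).trace := by
  have h_right (M : Matrix ι ι R) : M * Y * Λ = 0 := by rw [mul_assoc, hYΛ, mul_zero]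
  have h_cross : (Y * W * P * Y * W * Λ).trace = 0 := by
    rw [show Y * W * P * Y * W * Λ = Y * (W * P * Y * W * Λ) by simp only [mul_assoc],
      trace_mul_comm, mul_assoc _ Λ Y, hΛY, mul_zero, trace_zero]
  simp only [add_mul, mul_add, trace_add, ← mul_assoc, h_right, trace_zero, h_cross]
  simp

lemma mem_critCone_of_dirDerivG_eq {n m : ℕ} {f : (Fin n → ℝ) → ℝ}
    {G : (Fin n → ℝ) → Matrix (Fin m) (Fin m) ℝ} {x v : Fin n → ℝ}
    {Λ Y W : Matrix (Fin m) (Fin m) ℝ} (hgrad : gradf f x = adjDG G x Λ) (hY : Y.IsHermitian)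
    (hYY : Y * Y = G x) (hYΛ : Y * Λ = 0) (hΛY : Λ * Y = 0)
    (hv : dirDerivG G x v = Y * W + W * Y) : v ∈ CritCone f G x := by
  refine ⟨fun u hu => ?_, ?_⟩
  · have hYu : Y *ᵥ u = 0 := by
      rw [← conjTranspose_mul_self_mulVec_eq_zero, hY.eq, hYY, hu]
    rw [hv, add_mulVec, ← mulVec_mulVec, ← mulVec_mulVec, hYu, mulVec_zero, add_zero,
      dotProduct_mulVec, ← mulVec_transpose, (isHermitian_iff_isSymm.mp hY).eq, hYu,
      zero_dotProduct]
  · rw [hgrad, adjDG_dotProduct, hv, add_mul, trace_add, mul_assoc W, hYΛ, mul_zero, trace_zero,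
      add_zero, mul_assoc, trace_mul_comm, mul_assoc, hΛY, mul_zero, trace_zero]

theorem stmt15_general {n m : ℕ} (f : (Fin n → ℝ) → ℝ) (G : (Fin n → ℝ) → Matrix (Fin m) (Fin m) ℝ)
    (x : Fin n → ℝ) (Λ : Matrix (Fin m) (Fin m) ℝ)
    (hKKT : KKT1 f G x Λ) (hsc : (G x).rank + Λ.rank = m)
    (hsosc : ∀ P : Matrix (Fin m) (Fin m) ℝ, IsMPInv (G x) P →
      ∀ d ∈ CritCone f G x, d ≠ 0 →
        0 < hessQ f G Λ x d + d ⬝ᵥ (Hmat G x Λ P *ᵥ d)) :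
    ∃ Y : Matrix (Fin m) (Fin m) ℝ, Y.IsSymm ∧ KKT2 f G x Y Λ ∧
      SOSCNLP f G x Y Λ := by
  obtain ⟨hgrad, hΛ, hA, hjordan⟩ := hKKT
  set Y := CFC.sqrt (G x)
  have hY : Y.PosSemidef := posSemidef_sqrt (G x)
  have hYY : Y * Y = G x := CFC.sqrt_mul_sqrt_self (G x) hA.nonneg
  have hAΛ : G x * Λ = 0 := by
    refine hA.mul_eq_zero_of_add_eq_zero hΛ ?_
    rw [add_comm, ← two_smul_jmul, hjordan, smul_zero]
  have hYΛ : Y * Λ = 0 := by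
    rw [← conjTranspose_mul_self_mul_eq_zero, hY.isHermitian.eq, hYY, hAΛ]
  have hΛY : Λ * Y = 0 := by
    rw [← hΛ.isHermitian.eq, ← hY.isHermitian.eq, ← conjTranspose_mul, hYΛ, conjTranspose_zero]
  refine ⟨Y, isHermitian_iff_isSymm.mp hY.isHermitian, ⟨hgrad, by simp [jmul, hΛY, hYΛ],
    by rw [jmul_self, hYY]⟩, fun v W hW hnz hdir => ?_⟩
  have hWh : W.IsHermitian := isHermitian_iff_isSymm.mpr hW
  have hΓ : dirDerivG G x v = Y * W + W * Y := by rw [hdir, two_smul_jmul]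
  rw [minner, jmul_self]
  by_cases hv : v = 0
  · subst hv
    have hYW := hY.mul_eq_zero_of_mul_add_mul_eq_zero hWh (by rw [← hΓ, dirDerivG_zero])
    have hpos := trace_mul_self_mul_pos_of_rank_add_rank hΛ hAΛ (by simpa using hsc) hWh
      (by rw [← hYY, mul_assoc, hYW, mul_zero]) fun h => hnz ⟨rfl, h⟩
    rw [hessQ_zero]
    linarith
  · have key := hsosc _ (isMPInv_cfc_inv hA.isHermitian) v
      (mem_critCone_of_dirDerivG_eq hgrad hY.isHermitian hYY hYΛ hΛY hΓ) hv
    rw [dotProduct_Hmat_mulVec, hΓ, trace_anticomm_mul_anticomm_mul hYΛ hΛY] at key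
    have hle := hΛ.trace_conjTranspose_mul_mul_le hA.sqrt_mul_cfc_inv_mul_sqrt_le_one W
    rw [hWh.eq] at hle
    linarith

theorem stmt15 {n m : ℕ} (f : (Fin n → ℝ) → ℝ) (G : (Fin n → ℝ) → Matrix (Fin m) (Fin m) ℝ)
    (hf : ContDiff ℝ 2 f) (hG : ∀ i j, ContDiff ℝ 2 fun y => G y i j)
    (x : Fin n → ℝ) (Λ : Matrix (Fin m) (Fin m) ℝ)
    (hKKT : KKT1 f G x Λ) (hsc : (G x).rank + Λ.rank = m)
    (hsosc : ∀ P : Matrix (Fin m) (Fin m) ℝ, IsMPInv (G x) P →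
      ∀ d ∈ CritCone f G x, d ≠ 0 →
        0 < hessQ f G Λ x d + d ⬝ᵥ (Hmat G x Λ P *ᵥ d)) :
    ∃ Y : Matrix (Fin m) (Fin m) ℝ, Y.IsSymm ∧ KKT2 f G x Y Λ ∧
      SOSCNLP f G x Y Λ :=
  stmt15_general f G x Λ hKKT hsc hsosc
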